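/- Let A be an n×n complex matrix with rows a_1,…,a_n, and let A* be its adjugate (transpose of the cofactor matrix). Then every entry in the i-th column of A* has absolute value at most (|a_1|⋯|a_n|)/|a_i|, where |a_k| denotes the Euclidean norm of the row a_k. -/

import Mathlib

/-!
Expanding the determinant along row `i` shows that the `(j, i)` entry of the adjugate is the
determinant of `A` with row `i` replaced by the `j`-th standard basis vector. Hadamard's inequality
bounds that determinant by the product of its row norms, and the replaced row has norm one.
Hadamard's inequality itself holds because the determinant of a family `v` with respect to an
orthonormal basis is, up to a unimodular factor, independent of the basis, and in the Gram–Schmidt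
basis of `v` the matrix of `v` is triangular with diagonal entries `⟪gₖ, vₖ⟫`, each of norm at most
`‖vₖ‖`.
-/

open Module

namespace OrthonormalBasis

variable {𝕜 E ι : Type*} [RCLike 𝕜] [NormedAddCommGroup E] [InnerProductSpace 𝕜 E]
  [Fintype ι] [DecidableEq ι]

theorem norm_det_apply_eq (a b : OrthonormalBasis ι 𝕜 E) (v : ι → E) :
    ‖a.toBasis.det v‖ = ‖b.toBasis.det v‖ := by
  rw [AlternatingMap.eq_smul_basis_det b.toBasis a.toBasis.det, AlternatingMap.smul_apply,
    smul_eq_mul, norm_mul, b.coe_toBasis, det_to_matrix_orthonormalBasis, one_mul]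

theorem norm_det_le_prod_norm (b : OrthonormalBasis ι 𝕜 E) (v : ι → E) :
    ‖b.toBasis.det v‖ ≤ ∏ i, ‖v i‖ := by
  have : FiniteDimensional 𝕜 E := b.toBasis.finiteDimensional_of_finite
  let e := Fintype.equivFin ι
  have hdim : finrank 𝕜 E = Fintype.card (Fin (Fintype.card ι)) := by
    rw [finrank_eq_card_basis b.toBasis, Fintype.card_fin]
  let g := InnerProductSpace.gramSchmidtOrthonormalBasis hdim (v ∘ e.symm)
  calc ‖b.toBasis.det v‖ = ‖(g.reindex e.symm).toBasis.det v‖ := norm_det_apply_eq _ _ _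
    _ = ∏ k, ‖inner 𝕜 (g k) (v (e.symm k))‖ := by
      rw [reindex_toBasis, Basis.det_reindex, InnerProductSpace.gramSchmidtOrthonormalBasis_det,
        norm_prod]
      rfl
    _ ≤ ∏ k, ‖v (e.symm k)‖ := by
      gcongr with k
      simpa [g.orthonormal.1 k] using norm_inner_le_norm (𝕜 := 𝕜) (g k) (v (e.symm k))
    _ = ∏ i, ‖v i‖ := e.symm.prod_comp fun i => ‖v i‖

end OrthonormalBasis

namespace Matrix

variable {𝕜 ι : Type*} [RCLike 𝕜] [Fintype ι] [DecidableEq ι]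

theorem norm_det_le_prod_norm_row (M : Matrix ι ι 𝕜) :
    ‖M.det‖ ≤ ∏ i, ‖WithLp.toLp 2 (M i)‖ := by
  have hdet : (EuclideanSpace.basisFun ι 𝕜).toBasis.det (fun i => WithLp.toLp 2 (M i)) =
      M.det := by
    rw [Basis.det_apply, ← det_transpose]
    rfl
  rw [← hdet]
  exact (EuclideanSpace.basisFun ι 𝕜).norm_det_le_prod_norm _

theorem norm_adjugate_apply_le (A : Matrix ι ι 𝕜) (i j : ι) :
    ‖A.adjugate j i‖ ≤ ∏ k ∈ Finset.univ.erase i, ‖WithLp.toLp 2 (A k)‖ := by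
  set B := A.updateRow i (Pi.single j 1)
  have hBi : ‖WithLp.toLp 2 (B i)‖ = 1 := by simp [B]
  have hB : ∀ k ∈ Finset.univ.erase i, ‖WithLp.toLp 2 (B k)‖ = ‖WithLp.toLp 2 (A k)‖ :=
    fun k hk => by simp only [B, updateRow_ne (Finset.ne_of_mem_erase hk)]
  calc ‖A.adjugate j i‖ ≤ ∏ k, ‖WithLp.toLp 2 (B k)‖ := by
        rw [adjugate_apply]; exact norm_det_le_prod_norm_row B
    _ = (∏ k ∈ Finset.univ.erase i, ‖WithLp.toLp 2 (B k)‖) * ‖WithLp.toLp 2 (B i)‖ :=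
        (Finset.prod_erase_mul _ _ (Finset.mem_univ i)).symm
    _ = ∏ k ∈ Finset.univ.erase i, ‖WithLp.toLp 2 (A k)‖ := by
        rw [hBi, mul_one, Finset.prod_congr rfl hB]

end Matrix

/-- Every entry in the `i`-th column of the adjugate of an `n × n`
complex matrix `A` has absolute value at most `(|a_1| ⋯ |a_n|) / |a_i|`, i.e. the
product of the Euclidean norms of all rows of `A` other than the `i`-th one. -/
theorem stmt_0 (n : ℕ) (A : Matrix (Fin n) (Fin n) ℂ) (i j : Fin n) :
    ‖A.adjugate j i‖ ≤
      ∏ k ∈ Finset.univ.erase i, Real.sqrt (∑ l, ‖A k l‖ ^ 2) := by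
  simpa only [EuclideanSpace.norm_eq] using A.norm_adjugate_apply_le i j
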